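/- arXiv:2208.00743 — 2 statements merged into one kernel-verified Lean document; each statement's English description precedes it below -/
import Mathlib

section
/- For every integer n ≥ 3, the set B = {2, 3, …, 2^{n-1}−1} ∪ {2^{n-1}+1, …, 2^n−1} (i.e., P(n) with 0 and 1 removed, together with H(n) with 2^{n-1} removed) is a resolving set of Γ_n of cardinality 2^n − 3. -/
/-!
Every vertex of `B` is told apart from all others by its own coordinate, the only vertex at
distance `0` from it, so `B` only has to separate the three vertices `0, 1, m` it leaves out.
The probe `m + 1 ∈ H(n)` is adjacent to `0` alone and the probe `2 ∈ P(n)` to all of `P(n)`,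
which gives `0, 1, m` the distance vectors `(1, 1), (2, 1), (2, 2)`.
-/

open Finset

/-- The graph Γ_n: distinct vertices u, v ∈ {0,…,2^n−1} are adjacent iff
(u < 2^(n-1) and v < 2^(n-1)), or u = 0, or v = 0. -/
def Gamma (n : ℕ) : SimpleGraph (Fin (2 ^ n)) :=
  SimpleGraph.fromRel
    (fun u v => (u.val < 2 ^ (n - 1) ∧ v.val < 2 ^ (n - 1)) ∨ u.val = 0 ∨ v.val = 0)

/-- A finite set S of vertices is a resolving set of a graph G if distinct vertices
have distinct vectors of graph distances to the elements of S. -/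
def IsResolving {V : Type*} (G : SimpleGraph V) (S : Finset V) : Prop :=
  ∀ u v : V, (∀ s ∈ S, G.dist u s = G.dist v s) → u = v

namespace SimpleGraph

variable {V : Type*} {G : SimpleGraph V} {c : V}

lemma connected_of_forall_adj (hc : ∀ v, v ≠ c → G.Adj c v) : G.Connected :=
  (connected_iff_exists_forall_reachable G).mpr ⟨c, fun v => by
    by_cases hv : v = c
    · subst hv; rfl
    · exact (hc v hv).reachable⟩

lemma dist_eq_two_of_forall_adj (hc : ∀ v, v ≠ c → G.Adj c v) {u v : V} (huv : u ≠ v)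
    (h : ¬G.Adj u v) : G.dist u v = 2 := by
  have huc : u ≠ c := fun hu => h (hu ▸ hc v (hu ▸ huv).symm)
  have hvc : v ≠ c := fun hv => h (hv ▸ (hc u (hv ▸ huv)).symm)
  have hedist : G.edist u v = 2 :=
    edist_eq_two_iff.mpr ⟨huv, h, c, G.mem_commonNeighbors.mpr ⟨(hc u huc).symm, (hc v hvc).symm⟩⟩
  simp [dist, hedist]

end SimpleGraph

lemma IsResolving.of_forall_notMem {V : Type*} {G : SimpleGraph V} (hG : G.Connected)
    {S : Finset V} (h : ∀ u ∉ S, ∀ v ∉ S, (∀ s ∈ S, G.dist u s = G.dist v s) → u = v) :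
    IsResolving G S := by
  intro u v huv
  by_cases hu : u ∈ S
  · exact (hG.dist_eq_zero_iff.mp ((huv u hu).symm.trans G.dist_self)).symm
  by_cases hv : v ∈ S
  · exact hG.dist_eq_zero_iff.mp ((huv v hv).trans G.dist_self)
  exact h u hu v hv huv

section Gamma

variable {n : ℕ}

lemma gamma_adj {u v : Fin (2 ^ n)} :
    (Gamma n).Adj u v ↔ u ≠ v ∧
      ((u.val < 2 ^ (n - 1) ∧ v.val < 2 ^ (n - 1)) ∨ u.val = 0 ∨ v.val = 0) := by
  simp only [Gamma, SimpleGraph.fromRel_adj]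
  tauto

lemma gamma_zero_adj (v : Fin (2 ^ n)) (hv : v ≠ ⟨0, Nat.two_pow_pos n⟩) :
    (Gamma n).Adj ⟨0, Nat.two_pow_pos n⟩ v :=
  gamma_adj.mpr ⟨hv.symm, Or.inr (Or.inl rfl)⟩

lemma gamma_connected : (Gamma n).Connected :=
  SimpleGraph.connected_of_forall_adj gamma_zero_adj

lemma gamma_dist_of_le_val {u h : Fin (2 ^ n)} (hh : 2 ^ (n - 1) ≤ h.val) (hu : u ≠ h) :
    (Gamma n).dist u h = if u.val = 0 then 1 else 2 := by
  have := Nat.two_pow_pos (n - 1)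
  split_ifs with hu0
  · exact SimpleGraph.dist_eq_one_iff_adj.mpr (gamma_adj.mpr ⟨hu, Or.inr (Or.inl hu0)⟩)
  · refine SimpleGraph.dist_eq_two_of_forall_adj gamma_zero_adj hu fun hadj => ?_
    have := (gamma_adj.mp hadj).2
    omega

lemma gamma_dist_of_val_lt {u p : Fin (2 ^ n)} (hp0 : p.val ≠ 0) (hp : p.val < 2 ^ (n - 1))
    (hu : u ≠ p) : (Gamma n).dist u p = if u.val < 2 ^ (n - 1) then 1 else 2 := by
  split_ifs with hum
  · exact SimpleGraph.dist_eq_one_iff_adj.mpr (gamma_adj.mpr ⟨hu, Or.inl ⟨hum, hp⟩⟩)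
  · refine SimpleGraph.dist_eq_two_of_forall_adj gamma_zero_adj hu fun hadj => ?_
    have := (gamma_adj.mp hadj).2
    omega

end Gamma

def resolvingSet (n : ℕ) : Finset (Fin (2 ^ n)) :=
  univ.filter (fun v : Fin (2 ^ n) =>
    (2 ≤ v.val ∧ v.val < 2 ^ (n - 1)) ∨ 2 ^ (n - 1) + 1 ≤ v.val)

lemma notMem_resolvingSet {n : ℕ} (hn : 1 ≤ n) {v : Fin (2 ^ n)} :
    v ∉ resolvingSet n ↔ v.val = 0 ∨ v.val = 1 ∨ v.val = 2 ^ (n - 1) := by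
  have := mul_pow_sub_one (by omega : n ≠ 0) 2
  have := v.isLt
  simp only [resolvingSet, mem_filter, mem_univ, true_and]
  omega

lemma isResolving_resolvingSet {n : ℕ} (hn : 3 ≤ n) : IsResolving (Gamma n) (resolvingSet n) := by
  have hpow := mul_pow_sub_one (by omega : n ≠ 0) 2
  have hm : 4 ≤ 2 ^ (n - 1) := by
    simpa using Nat.pow_le_pow_right two_pos (show 2 ≤ n - 1 by omega)
  let high : Fin (2 ^ n) := ⟨2 ^ (n - 1) + 1, by omega⟩
  let low : Fin (2 ^ n) := ⟨2, by omega⟩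
  have high_mem : high ∈ resolvingSet n := mem_filter.mpr ⟨mem_univ _, Or.inr le_rfl⟩
  have low_mem : low ∈ resolvingSet n :=
    mem_filter.mpr ⟨mem_univ _, Or.inl ⟨le_rfl, show 2 < 2 ^ (n - 1) by omega⟩⟩
  have dist_high (w : Fin (2 ^ n)) (hw : w ∉ resolvingSet n) :
      (Gamma n).dist w high = if w.val = 0 then 1 else 2 :=
    gamma_dist_of_le_val (Nat.le_succ _) (ne_of_mem_of_not_mem high_mem hw).symm
  have dist_low (w : Fin (2 ^ n)) (hw : w ∉ resolvingSet n) :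
      (Gamma n).dist w low = if w.val < 2 ^ (n - 1) then 1 else 2 :=
    gamma_dist_of_val_lt two_ne_zero (show 2 < 2 ^ (n - 1) by omega)
      (ne_of_mem_of_not_mem low_mem hw).symm
  refine IsResolving.of_forall_notMem gamma_connected fun u hu v hv hdist => Fin.ext ?_
  have h_high := hdist high high_mem
  have h_low := hdist low low_mem
  rw [dist_high u hu, dist_high v hv] at h_high
  rw [dist_low u hu, dist_low v hv] at h_low
  rw [notMem_resolvingSet (by omega)] at hu hv
  split_ifs at h_high h_low <;> omega

lemma card_resolvingSet {n : ℕ} (hn : 2 ≤ n) : (resolvingSet n).card = 2 ^ n - 3 := by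
  have hpow := mul_pow_sub_one (by omega : n ≠ 0) 2
  have hm : 2 ≤ 2 ^ (n - 1) := by
    simpa using Nat.pow_le_pow_right two_pos (show 1 ≤ n - 1 by omega)
  have hcompl : (resolvingSet n)ᶜ.card = 3 := by
    refine card_eq_three.mpr ⟨⟨0, by omega⟩, ⟨1, by omega⟩, ⟨2 ^ (n - 1), by omega⟩,
      Fin.ne_of_val_ne (show 0 ≠ 1 by omega), Fin.ne_of_val_ne (show 0 ≠ 2 ^ (n - 1) by omega),
      Fin.ne_of_val_ne (show 1 ≠ 2 ^ (n - 1) by omega), ?_⟩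
    ext v
    simp only [mem_compl, notMem_resolvingSet (by omega : 1 ≤ n), mem_insert, mem_singleton,
      Fin.ext_iff]
  rw [card_compl, Fintype.card_fin] at hcompl
  omega

/-- For every n ≥ 3, the set B = {2,…,2^(n-1)−1} ∪ {2^(n-1)+1,…,2^n−1} is a
resolving set of Γ_n of cardinality 2^n − 3. -/
theorem stmt_11 (n : ℕ) (hn : 3 ≤ n) :
    IsResolving (Gamma n)
      (univ.filter (fun v : Fin (2 ^ n) =>
        (2 ≤ v.val ∧ v.val < 2 ^ (n - 1)) ∨ 2 ^ (n - 1) + 1 ≤ v.val)) ∧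
    (univ.filter (fun v : Fin (2 ^ n) =>
        (2 ≤ v.val ∧ v.val < 2 ^ (n - 1)) ∨ 2 ^ (n - 1) + 1 ≤ v.val)).card
      = 2 ^ n - 3 :=
  ⟨isResolving_resolvingSet hn, card_resolvingSet (by omega)⟩
end

section
/- For every integer n ≥ 3, the detour distances in Γ_n are as follows, for distinct vertices u, v: d_D(u,v) = 2^{n-1} − 1 if both u, v ∈ P(n) = {0,…,2^{n-1}−1}; d_D(0,w) = 1 if w ∈ H(n) = {2^{n-1},…,2^n−1}; d_D(u,w) = 2^{n-1} if u ∈ P(n) \ {0} and w ∈ H(n); and d_D(w,w') = 2 if both w, w' ∈ H(n). -/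
/-- The detour distance between two vertices: the maximum length of a path
(a walk with no repeated vertices) between them. -/
noncomputable def detourDist {V : Type*} (G : SimpleGraph V) (u v : V) : ℕ :=
  sSup {k : ℕ | ∃ p : G.Walk u v, p.IsPath ∧ p.length = k}

namespace SimpleGraph

variable {V : Type*} {G : SimpleGraph V}

theorem detourDist_eq_of_isPath {u v : V} {k : ℕ} (p : G.Walk u v) (hp : p.IsPath)
    (hk : p.length = k) (hmax : ∀ q : G.Walk u v, q.IsPath → q.length ≤ k) :
    detourDist G u v = k :=
  IsGreatest.csSup_eq ⟨⟨p, hp, hk⟩, by rintro _ ⟨q, hq, rfl⟩; exact hmax q hq⟩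

namespace Walk

theorem IsPath.card_support_toFinset [DecidableEq V] {u v : V} {p : G.Walk u v}
    (hp : p.IsPath) : p.support.toFinset.card = p.length + 1 := by
  rw [List.toFinset_card_of_nodup hp.support_nodup, length_support]

theorem IsPath.length_lt_card {u v : V} {p : G.Walk u v} (hp : p.IsPath) {t : Finset V}
    (ht : ∀ x ∈ p.support, x ∈ t) : p.length < t.card := by
  classical
  have := Finset.card_le_card (s := p.support.toFinset) fun x hx => ht x (List.mem_toFinset.1 hx)
  rw [hp.card_support_toFinset] at this
  omega

theorem IsPath.eq_or_eq_of_mem_support {u v w : V} {p : G.Walk u v} (hp : p.IsPath)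
    (hw : w ∈ p.support) (hdeg : (G.neighborSet w).Subsingleton) : w = u ∨ w = v := by
  obtain ⟨i, rfl, hi⟩ := mem_support_iff_exists_getVert.1 hw
  rcases Nat.eq_zero_or_pos i with rfl | hi0
  · exact .inl p.getVert_zero
  rcases hi.eq_or_lt with rfl | hil
  · exact .inr p.getVert_length
  have hprev : G.Adj (p.getVert i) (p.getVert (i - 1)) := by
    simpa only [Nat.sub_add_cancel hi0] using (p.adj_getVert_succ (i := i - 1) (by omega)).symm
  -- both path-neighbours of an inner vertex are neighbours of `w`, hence equal; a path forbids that
  have := hp.getVert_injOn (show i - 1 ≤ p.length by omega) (show i + 1 ≤ p.length by omega)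
    (hdeg hprev (p.adj_getVert_succ hil))
  omega

theorem IsPath.mem_of_mem_support {s : Set V} (hs : ∀ w ∉ s, (G.neighborSet w).Subsingleton)
    {u v : V} {p : G.Walk u v} (hp : p.IsPath) (hu : u ∈ s) (hv : v ∈ s) :
    ∀ x ∈ p.support, x ∈ s := by
  intro x hx
  by_contra hxs
  rcases hp.eq_or_eq_of_mem_support hx (hs x hxs) with rfl | rfl <;> contradiction

theorem IsPath.exists_tail_of_neighborSet_subset {c w v : V} {p : G.Walk w v} (hp : p.IsPath)
    (hwv : w ≠ v) (hw : G.neighborSet w ⊆ {c}) :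
    ∃ q : G.Walk c v, q.IsPath ∧ p.length = q.length + 1 := by
  cases p with
  | nil => exact absurd rfl hwv
  | cons h q =>
    obtain rfl : _ = c := hw h
    exact ⟨q, hp.of_cons, rfl⟩

theorem IsPath.length_eq_one_of_neighborSet_subset {c w : V} {p : G.Walk c w} (hp : p.IsPath)
    (hcw : c ≠ w) (hw : G.neighborSet w ⊆ {c}) : p.length = 1 := by
  obtain ⟨q, hq, hlen⟩ := hp.reverse.exists_tail_of_neighborSet_subset hcw.symm hw
  rw [isPath_iff_nil, ← length_eq_zero_iff] at hq
  rw [← length_reverse, hlen, hq]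

end Walk

open Walk

theorem IsClique.exists_walk_support_eq {s : Set V} (hs : G.IsClique s) {u v : V} {l : List V}
    (hl : (u :: (l ++ [v])).Nodup) (hls : ∀ x ∈ u :: (l ++ [v]), x ∈ s) :
    ∃ p : G.Walk u v, p.support = u :: (l ++ [v]) :=
  ⟨(ofSupport _ (List.cons_ne_nil _ _)
      (hl.imp_of_mem fun ha hb hab => hs (hls _ ha) (hls _ hb) hab).isChain).copy (by rfl)
      (by simp),
    (support_copy _ _ _).trans (support_ofSupport _ _)⟩

theorem IsClique.exists_isPath_support_toFinset_eq [DecidableEq V] {t : Finset V}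
    (ht : G.IsClique (t : Set V)) {u v : V} (hu : u ∈ t) (hv : v ∈ t) (huv : u ≠ v) :
    ∃ p : G.Walk u v, p.IsPath ∧ p.support.toFinset = t := by
  have hnodup : (u :: ((t \ {u, v}).toList ++ [v])).Nodup := by
    simp [List.nodup_append, huv, Finset.nodup_toList]
  have hset : (u :: ((t \ {u, v}).toList ++ [v])).toFinset = t := by
    ext x
    grind [List.mem_toFinset, Finset.mem_toList]
  obtain ⟨p, hp⟩ := ht.exists_walk_support_eq hnodup fun x hx => by
    rw [Finset.mem_coe, ← hset, List.mem_toFinset]; exact hx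
  exact ⟨p, isPath_def _ |>.2 (hp ▸ hnodup), hp ▸ hset⟩

section Pendants

variable {t : Finset V} {c : V}

theorem detourDist_eq_card_sub_one [DecidableEq V] (ht : G.IsClique (t : Set V))
    (hpend : ∀ w ∉ t, (G.neighborSet w).Subsingleton) {u v : V} (hu : u ∈ t) (hv : v ∈ t)
    (huv : u ≠ v) : detourDist G u v = t.card - 1 := by
  obtain ⟨p, hp, hpt⟩ := ht.exists_isPath_support_toFinset_eq hu hv huv
  refine detourDist_eq_of_isPath p hp ?_ fun q hq => ?_
  · rw [← hpt, hp.card_support_toFinset, Nat.add_sub_cancel]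
  · have := hq.length_lt_card (hq.mem_of_mem_support (s := t) hpend hu hv)
    omega

theorem detourDist_eq_one {w : V} (hw : G.neighborSet w ⊆ {c}) (hcw : G.Adj c w) :
    detourDist G c w = 1 :=
  detourDist_eq_of_isPath hcw.toWalk hcw.isPath_toWalk rfl fun _ hq =>
    (hq.length_eq_one_of_neighborSet_subset hcw.ne hw).le

theorem detourDist_eq_card [DecidableEq V] (ht : G.IsClique (t : Set V))
    (hpend : ∀ w ∉ t, G.neighborSet w ⊆ {c})
    (hc : c ∈ t) {u w : V} (hu : u ∈ t) (huc : u ≠ c) (hw : w ∉ t) (hcw : G.Adj c w) :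
    detourDist G u w = t.card := by
  obtain ⟨p, hp, hpt⟩ := ht.exists_isPath_support_toFinset_eq hu hc huc
  have hwp : w ∉ p.support := by rwa [← List.mem_toFinset, hpt]
  refine detourDist_eq_of_isPath (p.concat hcw) (hp.concat hwp hcw) ?_ fun q hq => ?_
  · rw [length_concat, ← hpt, hp.card_support_toFinset]
  · obtain ⟨r, hr, hlen⟩ := hq.reverse.exists_tail_of_neighborSet_subset
      (by rintro rfl; exact hw hu) (hpend w hw)
    have := hr.length_lt_card (hr.mem_of_mem_support (s := t)
      (fun x hx => Set.subsingleton_singleton.anti (hpend x hx)) hc hu)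
    rw [← length_reverse, hlen]
    omega

theorem detourDist_eq_two {w w' : V} (hw : G.neighborSet w ⊆ {c}) (hw' : G.neighborSet w' ⊆ {c})
    (hcw : G.Adj c w) (hcw' : G.Adj c w') (hww' : w ≠ w') : detourDist G w w' = 2 := by
  refine detourDist_eq_of_isPath (cons hcw.symm hcw'.toWalk) ?_ rfl fun q hq => ?_
  · simp [hcw.ne.symm, hcw'.ne, hww']
  · obtain ⟨r, hr, hlen⟩ := hq.exists_tail_of_neighborSet_subset hww' hw
    rw [hlen, hr.length_eq_one_of_neighborSet_subset hcw'.ne hw']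

end Pendants

end SimpleGraph

namespace Gamma

variable {n : ℕ}

def P (n : ℕ) : Finset (Fin (2 ^ n)) := {x | x.val < 2 ^ (n - 1)}

def zero (n : ℕ) : Fin (2 ^ n) := ⟨0, Nat.two_pow_pos n⟩

theorem mem_P {x : Fin (2 ^ n)} : x ∈ P n ↔ x.val < 2 ^ (n - 1) := by
  simp [P]

theorem notMem_P {x : Fin (2 ^ n)} : x ∉ P n ↔ 2 ^ (n - 1) ≤ x.val := by
  rw [mem_P, not_lt]

theorem card_P (n : ℕ) : (P n).card = 2 ^ (n - 1) := by
  rw [P, Fin.card_filter_val_lt, min_eq_right (Nat.pow_le_pow_right two_pos (n.sub_le 1))]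

theorem zero_mem_P : zero n ∈ P n :=
  mem_P.2 (Nat.two_pow_pos _)

theorem ne_zero_iff_pos {x : Fin (2 ^ n)} : x ≠ zero n ↔ 0 < x.val := by
  rw [Ne, Fin.ext_iff, zero, Nat.pos_iff_ne_zero]

theorem adj_iff {u v : Fin (2 ^ n)} : (Gamma n).Adj u v ↔
    u ≠ v ∧ ((u.val < 2 ^ (n - 1) ∧ v.val < 2 ^ (n - 1)) ∨ u.val = 0 ∨ v.val = 0) := by
  simp only [Gamma, SimpleGraph.fromRel_adj]
  tauto

theorem isClique_P : (Gamma n).IsClique (P n : Set (Fin (2 ^ n))) :=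
  fun _ hu _ hv huv => adj_iff.2 ⟨huv, .inl ⟨mem_P.1 hu, mem_P.1 hv⟩⟩

theorem zero_adj {x : Fin (2 ^ n)} (hx : x ≠ zero n) : (Gamma n).Adj (zero n) x :=
  adj_iff.2 ⟨hx.symm, .inr (.inl rfl)⟩

theorem neighborSet_subset_of_notMem_P {w : Fin (2 ^ n)} (hw : w ∉ P n) :
    (Gamma n).neighborSet w ⊆ {zero n} := by
  intro x hx
  rw [SimpleGraph.mem_neighborSet, adj_iff] at hx
  rw [notMem_P] at hw
  have := Nat.two_pow_pos (n - 1)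
  exact Fin.ext (by simp only [zero]; omega)

end Gamma

open SimpleGraph Gamma

theorem stmt_15_general (n : ℕ) :
    (∀ u v : Fin (2 ^ n), u ≠ v → u.val < 2 ^ (n - 1) → v.val < 2 ^ (n - 1) →
      detourDist (Gamma n) u v = 2 ^ (n - 1) - 1) ∧
    (∀ w : Fin (2 ^ n), 2 ^ (n - 1) ≤ w.val →
      detourDist (Gamma n) ⟨0, Nat.two_pow_pos n⟩ w = 1) ∧
    (∀ u w : Fin (2 ^ n), 1 ≤ u.val → u.val < 2 ^ (n - 1) → 2 ^ (n - 1) ≤ w.val →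
      detourDist (Gamma n) u w = 2 ^ (n - 1)) ∧
    (∀ w w' : Fin (2 ^ n), w ≠ w' → 2 ^ (n - 1) ≤ w.val → 2 ^ (n - 1) ≤ w'.val →
      detourDist (Gamma n) w w' = 2) := by
  have hpend {w : Fin (2 ^ n)} (hw : 2 ^ (n - 1) ≤ w.val) : (Gamma n).neighborSet w ⊆ {zero n} :=
    neighborSet_subset_of_notMem_P (notMem_P.2 hw)
  have hadj {w : Fin (2 ^ n)} (hw : 2 ^ (n - 1) ≤ w.val) : (Gamma n).Adj (zero n) w :=
    zero_adj (ne_zero_iff_pos.2 ((Nat.two_pow_pos _).trans_le hw))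
  refine ⟨fun u v huv hu hv => ?_, fun w hw => detourDist_eq_one (hpend hw) (hadj hw),
    fun u w hu₀ hu hw => ?_, fun w w' hww' hw hw' =>
      detourDist_eq_two (hpend hw) (hpend hw') (hadj hw) (hadj hw') hww'⟩
  · rw [← card_P n]
    exact detourDist_eq_card_sub_one isClique_P
      (fun _ hw => Set.subsingleton_singleton.anti (neighborSet_subset_of_notMem_P hw))
      (mem_P.2 hu) (mem_P.2 hv) huv
  · rw [← card_P n]
    exact detourDist_eq_card isClique_P (fun _ => neighborSet_subset_of_notMem_P) zero_mem_P
      (mem_P.2 hu) (ne_zero_iff_pos.2 hu₀) (notMem_P.2 hw) (hadj hw)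

/-- For every n ≥ 3 and distinct vertices u, v of Γ_n:
d_D(u,v) = 2^(n-1)−1 if u,v ∈ P(n); d_D(0,w) = 1 if w ∈ H(n);
d_D(u,w) = 2^(n-1) if u ∈ P(n)\{0} and w ∈ H(n); and
d_D(w,w') = 2 if w,w' ∈ H(n). -/
theorem stmt_15 (n : ℕ) (hn : 3 ≤ n) :
    (∀ u v : Fin (2 ^ n), u ≠ v → u.val < 2 ^ (n - 1) → v.val < 2 ^ (n - 1) →
      detourDist (Gamma n) u v = 2 ^ (n - 1) - 1) ∧
    (∀ w : Fin (2 ^ n), 2 ^ (n - 1) ≤ w.val →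
      detourDist (Gamma n) ⟨0, Nat.two_pow_pos n⟩ w = 1) ∧
    (∀ u w : Fin (2 ^ n), 1 ≤ u.val → u.val < 2 ^ (n - 1) → 2 ^ (n - 1) ≤ w.val →
      detourDist (Gamma n) u w = 2 ^ (n - 1)) ∧
    (∀ w w' : Fin (2 ^ n), w ≠ w' → 2 ^ (n - 1) ≤ w.val → 2 ^ (n - 1) ≤ w'.val →
      detourDist (Gamma n) w w' = 2) :=
  stmt_15_general n
end
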